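/- arXiv:1810.06948 — 2 statements merged into one kernel-verified Lean document; each statement's English description precedes it below -/
import Mathlib

section
/- Let p ≥ 1 and let a₁, ..., a_p be positive reals with m = min_n a_n and M = max_n a_n. Then 4(a₁ ⋯ a_p)^{1/p} − 4m ≥ 4 m^{(p−1)/p} (M^{1/p} − m^{1/p}) ≥ (4/p) (m/M)^{(p−1)/p} (M − m). -/
/-!
The product of the `aₙ` is at least `m^(p-1) M`, so the geometric mean is at least
`m^((p-1)/p) M^(1/p)`; subtracting `m = m^((p-1)/p) m^(1/p)` gives the first inequality.
The second is concavity of `x ↦ x^(1/p)` at `x = m/M`: `1 - (m/M)^(1/p) ≥ (1 - m/M)/p`.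
-/

open Finset

theorem Finset.pow_card_sub_one_mul_le_prod {ι R : Type*} [CommMonoidWithZero R] [Preorder R]
    [ZeroLEOneClass R] [PosMulMono R] {s : Finset ι} {a : ι → R} {m : R} {i : ι}
    (hi : i ∈ s) (hm : 0 ≤ m) (hle : ∀ j ∈ s, m ≤ a j) :
    m ^ (#s - 1) * a i ≤ ∏ j ∈ s, a j := by
  classical
  have hrest : m ^ (#s - 1) ≤ ∏ j ∈ s.erase i, a j := by
    rw [← card_erase_of_mem hi, ← prod_const]
    exact prod_le_prod (fun _ _ ↦ hm) fun j hj ↦ hle j (mem_of_mem_erase hj)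
  rw [← mul_prod_erase s a hi, mul_comm]
  exact mul_le_mul_of_nonneg_left hrest (hm.trans (hle i hi))

namespace Real

theorem rpow_le_one_add_mul_sub_one {x r : ℝ} (hx : 0 ≤ x) (hr₀ : 0 ≤ r) (hr₁ : r ≤ 1) :
    x ^ r ≤ 1 + r * (x - 1) := by
  simpa using rpow_one_add_le_one_add_mul_self (s := x - 1) (by linarith) hr₀ hr₁

theorem mul_sub_le_rpow_one_sub_mul_sub_rpow {m M r : ℝ} (hm : 0 ≤ m) (hM : 0 < M)
    (hr₀ : 0 ≤ r) (hr₁ : r ≤ 1) :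
    r * (M - m) ≤ M ^ (1 - r) * (M ^ r - m ^ r) := by
  have hconcave := rpow_le_one_add_mul_sub_one (div_nonneg hm hM.le) hr₀ hr₁
  have hMr : 0 < M ^ r := rpow_pos_of_pos hM r
  have hsplit : M ^ (1 - r) * M ^ r = M := by
    rw [← rpow_add hM, sub_add_cancel, rpow_one]
  have hratio : M ^ (1 - r) * m ^ r = M * (m / M) ^ r := by
    rw [div_rpow hm hM.le, mul_div_assoc', eq_div_iff hMr.ne', mul_right_comm, hsplit]
  calc r * (M - m) = M - M * (1 + r * (m / M - 1)) := by field_simp; ring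
    _ ≤ M - M * (m / M) ^ r := by gcongr
    _ = M ^ (1 - r) * (M ^ r - m ^ r) := by rw [mul_sub, hsplit, hratio]

theorem mul_div_rpow_one_sub_mul_sub_le {m M r : ℝ} (hm : 0 < m) (hM : 0 < M) (hr₀ : 0 ≤ r)
    (hr₁ : r ≤ 1) :
    r * (m / M) ^ (1 - r) * (M - m) ≤ m ^ (1 - r) * (M ^ r - m ^ r) := by
  calc r * (m / M) ^ (1 - r) * (M - m) = m ^ (1 - r) / M ^ (1 - r) * (r * (M - m)) := by
        rw [div_rpow hm.le hM.le]; ring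
    _ ≤ m ^ (1 - r) / M ^ (1 - r) * (M ^ (1 - r) * (M ^ r - m ^ r)) :=
        mul_le_mul_of_nonneg_left (mul_sub_le_rpow_one_sub_mul_sub_rpow hm.le hM hr₀ hr₁)
          (by positivity)
    _ = m ^ (1 - r) * (M ^ r - m ^ r) := by field_simp

end Real

/-- Chain of inequalities:
4(a₁⋯a_p)^{1/p} − 4m ≥ 4 m^{(p−1)/p}(M^{1/p} − m^{1/p}) ≥ (4/p)(m/M)^{(p−1)/p}(M − m). -/
theorem gap_bound_chain (p : ℕ) (hp : 1 ≤ p) (a : Fin p → ℝ) (ha : ∀ n, 0 < a n)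
    (m M : ℝ)
    (hm : m = Finset.univ.inf' ⟨⟨0, hp⟩, Finset.mem_univ _⟩ a)
    (hM : M = Finset.univ.sup' ⟨⟨0, hp⟩, Finset.mem_univ _⟩ a) :
    4 * m ^ (((p : ℝ) - 1) / p) * (M ^ ((1 : ℝ) / p) - m ^ ((1 : ℝ) / p))
      ≤ 4 * (∏ n, a n) ^ ((1 : ℝ) / p) - 4 * m ∧
    (4 / (p : ℝ)) * (m / M) ^ (((p : ℝ) - 1) / p) * (M - m)
      ≤ 4 * m ^ (((p : ℝ) - 1) / p) * (M ^ ((1 : ℝ) / p) - m ^ ((1 : ℝ) / p)) := by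
  have hne : (univ : Finset (Fin p)).Nonempty := ⟨⟨0, hp⟩, mem_univ _⟩
  obtain ⟨j, -, hmj⟩ := exists_mem_eq_inf' hne a
  obtain ⟨i, -, hMi⟩ := exists_mem_eq_sup' hne a
  have hm0 : 0 < m := hm ▸ hmj ▸ ha j
  have hle : ∀ n ∈ univ, m ≤ a n := fun n hn ↦ hm ▸ inf'_le a hn
  have haiM : a i = M := (hM.trans hMi).symm
  have hM0 : 0 < M := hm0.trans_le (haiM ▸ hle i (mem_univ i))
  have hp0 : (0 : ℝ) < p := by exact_mod_cast hp
  have hexp : ((p : ℝ) - 1) / p = 1 - 1 / p := by field_simp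
  have hsplit : m ^ (((p : ℝ) - 1) / p) * m ^ ((1 : ℝ) / p) = m := by
    rw [← Real.rpow_add hm0, hexp, sub_add_cancel, Real.rpow_one]
  have hgeom : m ^ (((p : ℝ) - 1) / p) * M ^ ((1 : ℝ) / p) ≤ (∏ n, a n) ^ ((1 : ℝ) / p) := by
    have hprod := pow_card_sub_one_mul_le_prod (mem_univ i) hm0.le hle
    rw [card_univ, Fintype.card_fin, haiM] at hprod
    calc m ^ (((p : ℝ) - 1) / p) * M ^ ((1 : ℝ) / p) = (m ^ (p - 1) * M) ^ ((1 : ℝ) / p) := by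
          rw [Real.mul_rpow (by positivity) hM0.le, ← Real.rpow_natCast, ← Real.rpow_mul hm0.le,
            Nat.cast_sub hp, Nat.cast_one, mul_one_div]
      _ ≤ (∏ n, a n) ^ ((1 : ℝ) / p) := by gcongr
  have hconcave := Real.mul_div_rpow_one_sub_mul_sub_le hm0 hM0 (r := 1 / p)
    (by positivity) (div_le_one_of_le₀ (by exact_mod_cast hp) hp0.le)
  rw [← hexp] at hconcave
  constructor
  · linear_combination 4 * hgeom - 4 * hsplit
  · linear_combination 4 * hconcave
end

section
/- Let p ≥ 2 and let a₁, ..., a_p be positive reals with m = min_n a_n and M = max_n a_n, and suppose M ≤ 4m. Then (4/p)(m/M)^{(p−1)/p}(M − m) ≥ (2/p)(M − m) holds when p = 2; more generally, for any p ≥ 2, max( 4(a₁⋯a_p)^{1/p} − 4m, 2M − 4m ) ≥ (2/p)(M − m). -/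
/-!
Write `t = M / m` and `u = G / m`, where `G` is the geometric mean. Since the product is at least
`m ^ (p - 1) * M`, we have `t ≤ u ^ p`, and the claim becomes
`t - 1 ≤ max (2p (u - 1)) (p t - 2p)`. If `u ^ (p - 1) ≤ 2`, the mean value bound
`u ^ p - 1 ≤ p u ^ (p - 1) (u - 1)` gives the first alternative. Otherwise
`(p - 1) log u ≥ log 2 > 1/2` forces `2 (p - 1) (u - 1) ≥ 1`, so `2p (u - 1) ≥ p / (p - 1)`; this
dominates `t - 1` unless `t > (2p - 1) / (p - 1)`, which is exactly the second alternative.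
-/

open Finset

theorem pow_card_sub_one_mul_le_prod {ι R : Type*} [Fintype ι] [CommSemiring R] [PartialOrder R]
    [IsOrderedRing R] {f : ι → R} {m : R} (hm : 0 ≤ m) (hf : ∀ i, m ≤ f i) (j : ι) :
    m ^ (Fintype.card ι - 1) * f j ≤ ∏ i, f i := by
  classical
  calc m ^ (Fintype.card ι - 1) * f j = (∏ _i ∈ univ.erase j, m) * f j := by
        rw [prod_const, card_erase_of_mem (mem_univ _), card_univ]
    _ ≤ (∏ i ∈ univ.erase j, f i) * f j := by
        gcongr with i
        · exact hm.trans (hf j)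
        · exact hf i
    _ = ∏ i, f i := prod_erase_mul _ _ (mem_univ j)

theorem pow_sub_one_le_mul_pow_pred {u : ℝ} (hu : 1 ≤ u) (p : ℕ) :
    u ^ p - 1 ≤ p * u ^ (p - 1) * (u - 1) := by
  have h := (le_abs_self _).trans (abs_pow_sub_pow_le u 1 p)
  rw [one_pow, abs_of_nonneg (sub_nonneg.2 hu), abs_of_nonneg (by linarith),
    abs_one, max_eq_left hu] at h
  linarith

theorem one_lt_two_mul_mul_sub_one_of_two_lt_pow {u : ℝ} {n : ℕ} (hu : 0 < u) (h : 2 < u ^ n) :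
    1 < 2 * n * (u - 1) := by
  have hlog : Real.log 2 < n * (u - 1) :=
    calc Real.log 2 < Real.log (u ^ n) := Real.log_lt_log two_pos h
      _ = n * Real.log u := Real.log_pow u n
      _ ≤ n * (u - 1) := by gcongr; exact Real.log_le_sub_one_of_pos hu
  linarith [Real.log_two_gt_d9]

theorem sub_one_le_max_of_le_pow {u t : ℝ} {p : ℕ} (hu : 1 ≤ u) (ht : t ≤ u ^ p) :
    t - 1 ≤ max (2 * p * (u - 1)) (p * t - 2 * p) := by
  rcases le_or_gt (u ^ (p - 1)) 2 with hsmall | hlarge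
  · refine le_max_of_le_left ?_
    calc t - 1 ≤ u ^ p - 1 := by linarith
      _ ≤ p * u ^ (p - 1) * (u - 1) := pow_sub_one_le_mul_pow_pred hu p
      _ ≤ p * 2 * (u - 1) := by gcongr
      _ = 2 * p * (u - 1) := by ring
  · obtain ⟨n, rfl⟩ := Nat.exists_eq_succ_of_ne_zero (n := p) (by rintro rfl; norm_num at hlarge)
    rw [Nat.succ_sub_one] at hlarge
    have hgap := one_lt_two_mul_mul_sub_one_of_two_lt_pow (by linarith) hlarge
    push_cast
    by_cases hbig : (2 * n + 1 : ℝ) ≤ n * t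
    · exact le_max_of_le_right (by linarith)
    · refine le_max_of_le_left ?_
      nlinarith

theorem two_div_mul_sub_le_max {m M G : ℝ} {p : ℕ} (hp : 0 < p) (hm : 0 < m) (hmM : m ≤ M)
    (hG : 0 ≤ G) (hMG : m ^ (p - 1) * M ≤ G ^ p) :
    2 / p * (M - m) ≤ max (4 * G - 4 * m) (2 * M - 4 * m) := by
  have hpow : m ^ (p - 1) * m = m ^ p := pow_sub_one_mul hp.ne' m
  have hmG : m ≤ G := le_of_pow_le_pow_left₀ hp.ne' hG <| by
    calc m ^ p = m ^ (p - 1) * m := hpow.symm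
      _ ≤ m ^ (p - 1) * M := by gcongr
      _ ≤ G ^ p := hMG
  have hu : 1 ≤ G / m := (one_le_div hm).2 hmG
  have ht : M / m ≤ (G / m) ^ p := by
    rw [div_pow, div_le_div_iff₀ hm (pow_pos hm p), ← hpow]
    nlinarith [pow_pos hm (p - 1)]
  calc 2 / p * (M - m) = 2 * m / p * (M / m - 1) := by field_simp
    _ ≤ 2 * m / p * max (2 * p * (G / m - 1)) (p * (M / m) - 2 * p) := by
        gcongr
        exact sub_one_le_max_of_le_pow hu ht
    _ = max (4 * G - 4 * m) (2 * M - 4 * m) := by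
        rw [mul_max_of_nonneg _ _ (by positivity)]
        congr 1 <;> field_simp <;> ring

/-- For positive reals a₁,...,a_p (p ≥ 2) with minimum m and maximum M,
max(4(a₁⋯a_p)^{1/p} − 4m, 2M − 4m) ≥ (2/p)(M − m). -/
theorem max_gap_bound (p : ℕ) (hp : 2 ≤ p) (a : Fin p → ℝ) (ha : ∀ n, 0 < a n)
    (m M : ℝ)
    (hm : m = Finset.univ.inf' ⟨⟨0, by omega⟩, Finset.mem_univ _⟩ a)
    (hM : M = Finset.univ.sup' ⟨⟨0, by omega⟩, Finset.mem_univ _⟩ a) :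
    (2 / (p : ℝ)) * (M - m)
      ≤ max (4 * (∏ n, a n) ^ ((1 : ℝ) / p) - 4 * m) (2 * M - 4 * m) := by
  obtain ⟨i, -, hi⟩ := exists_mem_eq_inf' (univ_nonempty_iff.2 ⟨⟨0, by omega⟩⟩) a
  obtain ⟨j, -, hj⟩ := exists_mem_eq_sup' (univ_nonempty_iff.2 ⟨⟨0, by omega⟩⟩) a
  have hmin : ∀ n, m ≤ a n := fun n => hm ▸ inf'_le a (mem_univ n)
  have hmi : m = a i := hm.trans hi
  have hmax : M = a j := hM.trans hj
  have hprod : 0 ≤ ∏ n, a n := prod_nonneg fun n _ => (ha n).le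
  have hroot : ((∏ n, a n) ^ ((1 : ℝ) / p)) ^ p = ∏ n, a n := by
    rw [one_div, Real.rpow_inv_natCast_pow hprod (by omega)]
  refine two_div_mul_sub_le_max (by omega) (hmi ▸ ha i) (hmax ▸ hmin j)
    (Real.rpow_nonneg hprod _) ?_
  rw [hroot, hmax]
  simpa using pow_card_sub_one_mul_le_prod (hmi ▸ (ha i).le) hmin j
end
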